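/- arXiv:2405.15545 — 7 statements merged into one kernel-verified Lean document; each statement's English description precedes it below -/
import Mathlib

section
/- Let 0 < τ_1 ≤ ... ≤ τ_n and S > 0. Define g(j) = (∑_{i=1}^j 1/τ_i)^{-1} (S + j) for j ∈ [n]. If j* is the largest index achieving min_{j∈[n]} g(j) and j* < n, then min_{j∈[n]} g(j) < τ_{j*+1}. -/
theorem min_lt_tau_succ_of_largest_minimizer (n : ℕ) (hn : 1 ≤ n) (τ : ℕ → ℝ)
    (hpos : ∀ i ∈ Finset.Icc 1 n, 0 < τ i)
    (hmono : ∀ i j, 1 ≤ i → i ≤ j → j ≤ n → τ i ≤ τ j)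
    (S : ℝ) (hS : 0 < S)
    (g : ℕ → ℝ) (hg : ∀ j, g j = (S + j) / ∑ i ∈ Finset.Icc 1 j, 1 / τ i)
    (M : ℝ) (hM : M = (Finset.Icc 1 n).inf' (Finset.nonempty_Icc.mpr hn) g)
    (jstar : ℕ) (hjmem : jstar ∈ Finset.Icc 1 n) (hjmin : g jstar = M)
    (hlargest : ∀ j ∈ Finset.Icc 1 n, g j = M → j ≤ jstar)
    (hjlt : jstar < n) :
    M < τ (jstar + 1) := by
  obtain ⟨hj1, hjn⟩ := Finset.mem_Icc.mp hjmem
  set A : ℝ := ∑ i ∈ Finset.Icc 1 jstar, 1 / τ i with hAdef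
  have hA : 0 < A := by
    apply Finset.sum_pos
    · intro i hi
      obtain ⟨h1, h2⟩ := Finset.mem_Icc.mp hi
      exact one_div_pos.mpr (hpos i (Finset.mem_Icc.mpr ⟨h1, h2.trans hjn⟩))
    · exact Finset.nonempty_Icc.mpr hj1
  have ht : 0 < τ (jstar + 1) :=
    hpos _ (Finset.mem_Icc.mpr ⟨by omega, by omega⟩)
  have hmem1 : jstar + 1 ∈ Finset.Icc 1 n := Finset.mem_Icc.mpr ⟨by omega, by omega⟩
  have hge : M ≤ g (jstar + 1) := by
    rw [hM]; exact Finset.inf'_le _ hmem1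
  have hne : g (jstar + 1) ≠ M := fun h => by
    have := hlargest _ hmem1 h; omega
  have hlt : M < g (jstar + 1) := lt_of_le_of_ne hge (Ne.symm hne)
  have hsum : (∑ i ∈ Finset.Icc 1 (jstar + 1), 1 / τ i) = A + 1 / τ (jstar + 1) := by
    rw [hAdef, ← Finset.sum_Icc_succ_top (by omega : 1 ≤ jstar + 1)]
  have hMA : M * A = S + jstar := by
    have := hg jstar
    rw [hjmin] at this
    rw [this, ← hAdef, div_mul_cancel₀ _ hA.ne']
  have hgj1 : g (jstar + 1) = (S + jstar + 1) / (A + 1 / τ (jstar + 1)) := by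
    rw [hg, hsum]; push_cast; ring_nf
  rw [hgj1] at hlt
  have hden : 0 < A + 1 / τ (jstar + 1) := by positivity
  rw [lt_div_iff₀ hden] at hlt
  have key : M * (1 / τ (jstar + 1)) < 1 := by nlinarith
  rw [mul_one_div, div_lt_one ht] at key
  exact key
end

section
/- Let 0 < τ_1 ≤ ... ≤ τ_n and S > 0. Define g(j) = (∑_{i=1}^j 1/τ_i)^{-1} (S + j). If j* is any index achieving min_{j∈[n]} g(j) and j* < n, then min_{j∈[n]} g(j) ≤ τ_{j*+1}. -/
theorem min_le_tau_succ_of_minimizer (n : ℕ) (hn : 1 ≤ n) (τ : ℕ → ℝ)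
    (hpos : ∀ i ∈ Finset.Icc 1 n, 0 < τ i)
    (hmono : ∀ i j, 1 ≤ i → i ≤ j → j ≤ n → τ i ≤ τ j)
    (S : ℝ) (hS : 0 < S)
    (g : ℕ → ℝ) (hg : ∀ j, g j = (S + j) / ∑ i ∈ Finset.Icc 1 j, 1 / τ i)
    (M : ℝ) (hM : M = (Finset.Icc 1 n).inf' (Finset.nonempty_Icc.mpr hn) g)
    (jstar : ℕ) (hjmem : jstar ∈ Finset.Icc 1 n) (hjmin : g jstar = M)
    (hjlt : jstar < n) :
    M ≤ τ (jstar + 1) := by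
  obtain ⟨hj1, hjn⟩ := Finset.mem_Icc.mp hjmem
  set Sig : ℝ := ∑ i ∈ Finset.Icc 1 jstar, 1 / τ i with hSig
  have hSigpos : 0 < Sig := by
    apply Finset.sum_pos
    · intro i hi
      obtain ⟨hi1, hi2⟩ := Finset.mem_Icc.mp hi
      exact one_div_pos.mpr (hpos i (Finset.mem_Icc.mpr ⟨hi1, hi2.trans hjn⟩))
    · exact Finset.nonempty_Icc.mpr hj1
  have hτpos : 0 < τ (jstar + 1) :=
    hpos _ (Finset.mem_Icc.mpr ⟨by omega, by omega⟩)
  have hMSig : M * Sig = S + jstar := by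
    rw [← hjmin, hg]
    field_simp
    exact div_self hSigpos.ne'
  have hsucc : ∑ i ∈ Finset.Icc 1 (jstar + 1), 1 / τ i = Sig + 1 / τ (jstar + 1) := by
    rw [hSig, Finset.sum_Icc_succ_top (by omega : 1 ≤ jstar + 1)]
  have hle : M ≤ g (jstar + 1) := by
    rw [hM]
    exact Finset.inf'_le g (Finset.mem_Icc.mpr ⟨by omega, by omega⟩)
  rw [hg, hsucc] at hle
  have hden : 0 < Sig + 1 / τ (jstar + 1) := by positivity
  rw [le_div_iff₀ hden] at hle
  have hcast : ((jstar + 1 : ℕ) : ℝ) = (jstar : ℝ) + 1 := by push_cast; ring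
  rw [hcast] at hle
  have : M * (1 / τ (jstar + 1)) ≤ 1 := by nlinarith
  have hMpos : 0 < M := by
    rw [← hjmin, hg]
    have : (0:ℝ) < S + jstar := by positivity
    exact div_pos this hSigpos
  rw [mul_one_div, div_le_one hτpos] at this
  exact this
end

section
/- Let 0 < τ_1 ≤ ... ≤ τ_n and S > 0. Define g(j) = (∑_{i=1}^j 1/τ_i)^{-1} (S + j). If j* is the smallest index achieving min_{j∈[n]} g(j), then τ_{j*} < min_{j∈[n]} g(j). -/
/-!
Write `H j = ∑_{i ≤ j} 1/τ_i`. Then `g (j+1) = (S + j + 1) / (H j + 1/τ_{j+1})` is the mediant of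
`g j = (S + j) / H j` and `τ_{j+1} = 1 / (1/τ_{j+1})`, so it lies strictly between them unless they
coincide. Since `j*` is the smallest minimizer, either `j* = 1`, where `g 1 = (S + 1) τ_1 > τ_1`, or
`g j* < g (j* - 1)`, and then the mediant property puts `τ_{j*}` strictly below `g j*`.
-/

open Finset

theorem div_lt_add_div_add_of_add_div_add_lt {K : Type*} [Field K] [LinearOrder K]
    [IsStrictOrderedRing K] {a b c d : K} (hb : 0 < b) (hd : 0 < d)
    (h : (a + c) / (b + d) < a / b) : c / d < (a + c) / (b + d) := by
  rw [div_lt_div_iff₀ (add_pos hb hd) hb] at h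
  rw [div_lt_div_iff₀ hd (add_pos hb hd)]
  linarith

theorem lt_add_one_div_sum_Icc_one (S : ℝ) (hS : 0 < S) (τ : ℕ → ℝ) (hτ : 0 < τ 1) :
    τ 1 < (S + ((1 : ℕ) : ℝ)) / ∑ i ∈ Icc 1 1, 1 / τ i := by
  rw [Icc_self, sum_singleton, Nat.cast_one, div_div_eq_mul_div, div_one]
  nlinarith

theorem lt_div_sum_Icc_succ_of_lt (S : ℝ) (τ : ℕ → ℝ) {k : ℕ} (hk : 1 ≤ k)
    (hτ : ∀ i ∈ Icc 1 (k + 1), 0 < τ i)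
    (h : (S + ((k + 1 : ℕ) : ℝ)) / ∑ i ∈ Icc 1 (k + 1), 1 / τ i
      < (S + (k : ℝ)) / ∑ i ∈ Icc 1 k, 1 / τ i) :
    τ (k + 1) < (S + ((k + 1 : ℕ) : ℝ)) / ∑ i ∈ Icc 1 (k + 1), 1 / τ i := by
  have hsum_pos : 0 < ∑ i ∈ Icc 1 k, 1 / τ i :=
    sum_pos (fun i hi => one_div_pos.mpr (hτ i (Icc_subset_Icc_right k.le_succ hi)))
      (nonempty_Icc.mpr hk)
  have hlast : 0 < τ (k + 1) := hτ (k + 1) (right_mem_Icc.mpr (by omega))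
  rw [sum_Icc_succ_top (by omega), Nat.cast_succ, ← add_assoc] at h ⊢
  simpa only [div_div_eq_mul_div, one_mul, div_one] using
    div_lt_add_div_add_of_add_div_add_lt hsum_pos (one_div_pos.mpr hlast) h

theorem tau_lt_min_of_smallest_minimizer_general (n : ℕ) (hn : 1 ≤ n) (τ : ℕ → ℝ)
    (hpos : ∀ i ∈ Finset.Icc 1 n, 0 < τ i)
    (S : ℝ) (hS : 0 < S)
    (g : ℕ → ℝ) (hg : ∀ j, g j = (S + j) / ∑ i ∈ Finset.Icc 1 j, 1 / τ i)
    (M : ℝ) (hM : M = (Finset.Icc 1 n).inf' (Finset.nonempty_Icc.mpr hn) g)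
    (jstar : ℕ) (hjmem : jstar ∈ Finset.Icc 1 n) (hjmin : g jstar = M)
    (hsmallest : ∀ j ∈ Finset.Icc 1 n, g j = M → jstar ≤ j) :
    τ jstar < M := by
  obtain ⟨hj1, hjn⟩ := mem_Icc.mp hjmem
  rw [← hjmin, hg]
  obtain rfl | ⟨k, hk, rfl⟩ : jstar = 1 ∨ ∃ k, 1 ≤ k ∧ jstar = k + 1 :=
    (eq_or_lt_of_le hj1).imp Eq.symm fun h => ⟨jstar - 1, by omega, by omega⟩
  · exact lt_add_one_div_sum_Icc_one S hS τ (hpos 1 hjmem)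
  · have hkmem : k ∈ Icc 1 n := mem_Icc.mpr ⟨hk, by omega⟩
    have hprev : M < g k := (hM ▸ inf'_le g hkmem).lt_of_ne
      fun h => absurd (hsmallest k hkmem h.symm) (by omega)
    refine lt_div_sum_Icc_succ_of_lt S τ hk
      (fun i hi => hpos i (Icc_subset_Icc_right hjn hi)) ?_
    rwa [← hg, ← hg, hjmin]

theorem tau_lt_min_of_smallest_minimizer (n : ℕ) (hn : 1 ≤ n) (τ : ℕ → ℝ)
    (hpos : ∀ i ∈ Finset.Icc 1 n, 0 < τ i)
    (hmono : ∀ i j, 1 ≤ i → i ≤ j → j ≤ n → τ i ≤ τ j)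
    (S : ℝ) (hS : 0 < S)
    (g : ℕ → ℝ) (hg : ∀ j, g j = (S + j) / ∑ i ∈ Finset.Icc 1 j, 1 / τ i)
    (M : ℝ) (hM : M = (Finset.Icc 1 n).inf' (Finset.nonempty_Icc.mpr hn) g)
    (jstar : ℕ) (hjmem : jstar ∈ Finset.Icc 1 n) (hjmin : g jstar = M)
    (hsmallest : ∀ j ∈ Finset.Icc 1 n, g j = M → jstar ≤ j) :
    τ jstar < M :=
  tau_lt_min_of_smallest_minimizer_general n hn τ hpos S hS g hg M hM jstar hjmem hjmin hsmallest
end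

section
/- Let 0 < τ_1 ≤ ... ≤ τ_n and S > 0. Define g(j) = (∑_{i=1}^j 1/τ_i)^{-1} (S + j). If j* is any index achieving min_{j∈[n]} g(j), then τ_{j*} ≤ min_{j∈[n]} g(j). -/
/-!
Write `D_j = ∑_{i ≤ j} 1/τ_i`, so that `g j = (S + j) / D_j` and `D_j = D_{j-1} + 1/τ_j`.
Clearing denominators, `τ_j ≤ g j` is equivalent to `τ_j D_{j-1} ≤ S + j - 1`. For `j = 1` this is
`0 ≤ S`; for `j > 1` it is what minimality, `g j ≤ g (j - 1)`, becomes.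
-/

lemma le_div_add_inv_iff {t D c : ℝ} (ht : 0 < t) (hD : 0 ≤ D) :
    t ≤ (c + 1) / (D + 1 / t) ↔ t * D ≤ c := by
  rw [le_div_iff₀ (by positivity), mul_add, mul_one_div_cancel ht.ne']
  constructor <;> intro h <;> linarith

lemma mul_le_of_div_add_inv_le {t D c : ℝ} (ht : 0 < t) (hD : 0 < D)
    (h : (c + 1) / (D + 1 / t) ≤ c / D) : t * D ≤ c := by
  rw [div_le_div_iff₀ (by positivity) hD, mul_add, mul_one_div] at h
  have hDt : D ≤ c / t := by linarith
  rw [le_div_iff₀ ht] at hDt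
  linarith

lemma sum_Icc_one_div_pos {τ : ℕ → ℝ} {n k : ℕ} (hpos : ∀ i ∈ Finset.Icc 1 n, 0 < τ i)
    (hk : 1 ≤ k) (hkn : k ≤ n) : 0 < ∑ i ∈ Finset.Icc 1 k, 1 / τ i :=
  Finset.sum_pos (fun i hi ↦ one_div_pos.mpr (hpos i (Finset.Icc_subset_Icc_right hkn hi)))
    (Finset.nonempty_Icc.mpr hk)

theorem tau_le_min_of_minimizer_general (n : ℕ) (hn : 1 ≤ n) (τ : ℕ → ℝ)
    (hpos : ∀ i ∈ Finset.Icc 1 n, 0 < τ i)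
    (S : ℝ) (hS : 0 < S)
    (g : ℕ → ℝ) (hg : ∀ j, g j = (S + j) / ∑ i ∈ Finset.Icc 1 j, 1 / τ i)
    (M : ℝ) (hM : M = (Finset.Icc 1 n).inf' (Finset.nonempty_Icc.mpr hn) g)
    (jstar : ℕ) (hjmem : jstar ∈ Finset.Icc 1 n) (hjmin : g jstar = M) :
    τ jstar ≤ M := by
  obtain ⟨k, rfl⟩ : ∃ k, jstar = k + 1 := ⟨jstar - 1, by grind⟩
  have hkn : k + 1 ≤ n := (Finset.mem_Icc.mp hjmem).2
  have hτ : 0 < τ (k + 1) := hpos _ hjmem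
  have hg_succ : g (k + 1) = (S + k + 1) / (∑ i ∈ Finset.Icc 1 k, 1 / τ i + 1 / τ (k + 1)) := by
    rw [hg, Finset.sum_Icc_succ_top (by omega), Nat.cast_succ, add_assoc]
  rw [← hjmin, hg_succ, le_div_add_inv_iff hτ]
  · rcases Nat.eq_zero_or_pos k with rfl | hk
    · simpa using hS.le
    · have hgk : g (k + 1) ≤ g k := hjmin ▸ hM ▸ Finset.inf'_le g (by grind)
      rw [hg_succ, hg k] at hgk
      exact mul_le_of_div_add_inv_le hτ (sum_Icc_one_div_pos hpos hk (by omega)) hgk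
  · exact Finset.sum_nonneg fun i hi ↦
      (one_div_pos.mpr (hpos i (Finset.Icc_subset_Icc_right (by omega) hi))).le

theorem tau_le_min_of_minimizer (n : ℕ) (hn : 1 ≤ n) (τ : ℕ → ℝ)
    (hpos : ∀ i ∈ Finset.Icc 1 n, 0 < τ i)
    (hmono : ∀ i j, 1 ≤ i → i ≤ j → j ≤ n → τ i ≤ τ j)
    (S : ℝ) (hS : 0 < S)
    (g : ℕ → ℝ) (hg : ∀ j, g j = (S + j) / ∑ i ∈ Finset.Icc 1 j, 1 / τ i)
    (M : ℝ) (hM : M = (Finset.Icc 1 n).inf' (Finset.nonempty_Icc.mpr hn) g)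
    (jstar : ℕ) (hjmem : jstar ∈ Finset.Icc 1 n) (hjmin : g jstar = M) :
    τ jstar ≤ M :=
  tau_le_min_of_minimizer_general n hn τ hpos S hS g hg M hM jstar hjmem hjmin
end

section
/- Suppose 0 < τ_1 ≤ ... ≤ τ_n, let j_B ∈ [n], S ≥ 0, and assume τ_j ≥ B for all j > j_B, where B ≥ (S + j_B)/(∑_{i=1}^{j_B} 1/τ_i). Then min_{j∈[n]} (∑_{i=1}^j 1/τ_i)^{-1} (S+j) = min_{j∈[j_B]} (∑_{i=1}^j 1/τ_i)^{-1} (S+j), i.e., the extremely slow workers can be ignored in the equilibrium time. -/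
/-!
Write `A_j = ∑_{i ≤ j} 1/τ_i`. For `j > j_B` the extra workers satisfy `τ_i ≥ B`, so they add
`j - j_B` to the numerator and some `E` with `B * E ≤ j - j_B` to the denominator. Their own ratio is
thus at least `B ≥ (S + j_B)/A_{j_B}`, and by the mediant inequality the ratio at `j` is at least the one at
`j_B`: the minimum is attained among the first `j_B` workers.
-/

open Finset

section OrderedField

variable {α : Type*} [Field α] [LinearOrder α] [IsStrictOrderedRing α]

theorem div_le_add_div_add {a b c d B : α} (hb : 0 < b) (hd : 0 ≤ d)
    (hab : a ≤ B * b) (hcd : B * d ≤ c) : a / b ≤ (a + c) / (b + d) := by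
  rw [div_le_div_iff₀ hb (add_pos_of_pos_of_nonneg hb hd)]
  nlinarith [mul_le_mul_of_nonneg_right hab hd, mul_le_mul_of_nonneg_right hcd hb.le]

theorem mul_sum_one_div_le_card {ι : Type*} {s : Finset ι} {τ : ι → α} {B : α}
    (hτ : ∀ i ∈ s, 0 < τ i ∧ B ≤ τ i) : B * ∑ i ∈ s, 1 / τ i ≤ #s := by
  rw [mul_sum, ← nsmul_one]
  refine sum_le_card_nsmul _ _ _ fun i hi => ?_
  rw [mul_one_div, div_le_one (hτ i hi).1]
  exact (hτ i hi).2

end OrderedField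

theorem sum_Icc_one_add_sum_Ioc {M : Type*} [AddCommMonoid M] (f : ℕ → M) {k j : ℕ} (hkj : k ≤ j) :
    ∑ i ∈ Icc 1 k, f i + ∑ i ∈ Ioc k j, f i = ∑ i ∈ Icc 1 j, f i := by
  have hIcc (m : ℕ) : Icc 1 m = Ioc 0 m := Icc_add_one_left_eq_Ioc 0 m
  rw [hIcc, hIcc]
  exact sum_Ioc_consecutive f k.zero_le hkj

noncomputable def prefixTime (τ : ℕ → ℝ) (S : ℝ) (j : ℕ) : ℝ :=
  (S + j) / ∑ i ∈ Icc 1 j, 1 / τ i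

theorem prefixTime_le_of_slow {τ : ℕ → ℝ} {S B : ℝ} {k j : ℕ} (hk : 1 ≤ k) (hkj : k ≤ j)
    (hpos : ∀ i ∈ Icc 1 j, 0 < τ i) (hB : prefixTime τ S k ≤ B)
    (hslow : ∀ i, k < i → i ≤ j → B ≤ τ i) :
    prefixTime τ S k ≤ prefixTime τ S j := by
  have hA : 0 < ∑ i ∈ Icc 1 k, 1 / τ i :=
    sum_pos (fun i hi => one_div_pos.2 (hpos i (Icc_subset_Icc_right hkj hi))) (nonempty_Icc.2 hk)
  have hτ : ∀ i ∈ Ioc k j, 0 < τ i ∧ B ≤ τ i := fun i hi => by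
    obtain ⟨hki, hij⟩ := mem_Ioc.1 hi
    exact ⟨hpos i (mem_Icc.2 ⟨by omega, hij⟩), hslow i hki hij⟩
  have hE : 0 ≤ ∑ i ∈ Ioc k j, 1 / τ i :=
    sum_nonneg fun i hi => (one_div_pos.2 (hτ i hi).1).le
  have hBE := mul_sum_one_div_le_card hτ
  rw [Nat.card_Ioc, Nat.cast_sub hkj] at hBE
  unfold prefixTime at hB ⊢
  rw [← sum_Icc_one_add_sum_Ioc _ hkj, show S + (j : ℝ) = S + k + (j - k) by ring]
  exact div_le_add_div_add hA hE ((div_le_iff₀ hA).1 hB) hBE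

theorem Finset.inf'_eq_inf'_of_subset {α β : Type*} [SemilatticeInf α] {s t : Finset β} {f : β → α}
    (hs : s.Nonempty) (hst : s ⊆ t) (h : ∀ j ∈ t, s.inf' hs f ≤ f j) :
    t.inf' (hs.mono hst) f = s.inf' hs f :=
  le_antisymm (inf'_mono f hst hs) (le_inf' _ _ h)

theorem equilibrium_time_ignores_slow_workers_general (n : ℕ) (hn : 1 ≤ n) (τ : ℕ → ℝ)
    (hpos : ∀ i ∈ Finset.Icc 1 n, 0 < τ i)
    (jB : ℕ) (hjB : jB ∈ Finset.Icc 1 n)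
    (S : ℝ) (B : ℝ)
    (hB : (S + jB) / (∑ i ∈ Finset.Icc 1 jB, 1 / τ i) ≤ B)
    (hslow : ∀ j, jB < j → j ≤ n → B ≤ τ j) :
    (Finset.Icc 1 n).inf' (Finset.nonempty_Icc.mpr hn)
        (fun j => (S + j) / ∑ i ∈ Finset.Icc 1 j, 1 / τ i)
      = (Finset.Icc 1 jB).inf' (Finset.nonempty_Icc.mpr (Finset.mem_Icc.mp hjB).1)
        (fun j => (S + j) / ∑ i ∈ Finset.Icc 1 j, 1 / τ i) := by
  obtain ⟨hjB1, hjBn⟩ := mem_Icc.1 hjB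
  refine inf'_eq_inf'_of_subset _ (Icc_subset_Icc_right hjBn) fun j hj => ?_
  obtain ⟨hj1, hjn⟩ := mem_Icc.1 hj
  rcases le_or_gt j jB with hjjB | hjBj
  · exact inf'_le _ (mem_Icc.2 ⟨hj1, hjjB⟩)
  · refine (inf'_le _ (mem_Icc.2 ⟨hjB1, le_rfl⟩)).trans ?_
    exact prefixTime_le_of_slow hjB1 hjBj.le
      (fun i hi => hpos i (Icc_subset_Icc_right hjn hi)) hB
      (fun i hi hij => hslow i hi (hij.trans hjn))

theorem equilibrium_time_ignores_slow_workers (n : ℕ) (hn : 1 ≤ n) (τ : ℕ → ℝ)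
    (hpos : ∀ i ∈ Finset.Icc 1 n, 0 < τ i)
    (hmono : ∀ i j, 1 ≤ i → i ≤ j → j ≤ n → τ i ≤ τ j)
    (jB : ℕ) (hjB : jB ∈ Finset.Icc 1 n)
    (S : ℝ) (hS : 0 ≤ S) (B : ℝ)
    (hB : (S + jB) / (∑ i ∈ Finset.Icc 1 jB, 1 / τ i) ≤ B)
    (hslow : ∀ j, jB < j → j ≤ n → B ≤ τ j) :
    (Finset.Icc 1 n).inf' (Finset.nonempty_Icc.mpr hn)
        (fun j => (S + j) / ∑ i ∈ Finset.Icc 1 j, 1 / τ i)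
      = (Finset.Icc 1 jB).inf' (Finset.nonempty_Icc.mpr (Finset.mem_Icc.mp hjB).1)
        (fun j => (S + j) / ∑ i ∈ Finset.Icc 1 j, 1 / τ i) :=
  equilibrium_time_ignores_slow_workers_general n hn τ hpos jB hjB S B hB hslow
end

section
/- Let L_-, L_± > 0, m a positive integer, n ≥ 1 with n ≤ (L_± √m)/L_- ≤ m, and 0 < τ_1 ≤ ... ≤ τ_n. Then (1/2) t*((L_± √m)/L_-) ≤ (L_±/(L_- √m)) t*(m) ≤ t*((L_± √m)/L_-), where t*(S) = min_{j∈[n]} (∑_{i=1}^j 1/τ_i)^{-1} (S + j). -/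
theorem equilibrium_time_ratio_bounds (m n : ℕ) (hm : 1 ≤ m) (hn : 1 ≤ n)
    (Lm Lpm : ℝ) (hLm : 0 < Lm) (hLpm : 0 < Lpm)
    (hlow : (n : ℝ) ≤ Lpm * Real.sqrt m / Lm)
    (hhigh : Lpm * Real.sqrt m / Lm ≤ m)
    (τ : ℕ → ℝ)
    (hpos : ∀ i ∈ Finset.Icc 1 n, 0 < τ i)
    (hmono : ∀ i j, 1 ≤ i → i ≤ j → j ≤ n → τ i ≤ τ j)
    (tstar : ℝ → ℝ)
    (htstar : ∀ S : ℝ, tstar S = (Finset.Icc 1 n).inf' (Finset.nonempty_Icc.mpr hn)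
        (fun j => (S + j) / ∑ i ∈ Finset.Icc 1 j, 1 / τ i)) :
    (1 / 2) * tstar (Lpm * Real.sqrt m / Lm) ≤ (Lpm / (Lm * Real.sqrt m)) * tstar m ∧
      (Lpm / (Lm * Real.sqrt m)) * tstar m ≤ tstar (Lpm * Real.sqrt m / Lm) := by
  have hm' : (0:ℝ) < m := by exact_mod_cast hm
  have hsm : (0:ℝ) < Real.sqrt m := Real.sqrt_pos.mpr hm'
  have hmm : Real.sqrt m * Real.sqrt m = m := Real.mul_self_sqrt hm'.le
  set S₀ : ℝ := Lpm * Real.sqrt m / Lm with hS₀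
  set c : ℝ := Lpm / (Lm * Real.sqrt m) with hc
  have hc0 : 0 < c := div_pos hLpm (mul_pos hLm hsm)
  have hcm : c * m = S₀ := by
    rw [hc, hS₀]
    field_simp
    linear_combination (-1) * hmm
  have hc1 : c ≤ 1 := by
    have h1 : c * m ≤ 1 * m := by rw [hcm, one_mul]; exact hhigh
    exact le_of_mul_le_mul_right h1 hm'
  have hS0n : (n : ℝ) ≤ S₀ := hlow
  have hSum : ∀ j ∈ Finset.Icc 1 n, 0 < ∑ i ∈ Finset.Icc 1 j, 1 / τ i := by
    intro j hj
    simp only [Finset.mem_Icc] at hj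
    apply Finset.sum_pos
    · intro i hi
      simp only [Finset.mem_Icc] at hi
      exact one_div_pos.mpr (hpos i (Finset.mem_Icc.mpr ⟨hi.1, hi.2.trans hj.2⟩))
    · exact Finset.nonempty_Icc.mpr hj.1
  rw [htstar, htstar]
  set H := Finset.nonempty_Icc.mpr hn with hH
  have hmc : Monotone (fun x : ℝ => c * x) := fun a b hab =>
    mul_le_mul_of_nonneg_left hab hc0.le
  have hmap : c * (Finset.Icc 1 n).inf' H (fun j => ((m:ℝ) + j) / ∑ i ∈ Finset.Icc 1 j, 1 / τ i)
      = (Finset.Icc 1 n).inf' H (fun j => c * (((m:ℝ) + j) / ∑ i ∈ Finset.Icc 1 j, 1 / τ i)) :=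
    Finset.apply_inf'_eq_inf'_comp H _ (fun x y => hmc.map_min)
  constructor
  · rw [hmap]
    apply Finset.le_inf'
    intro j hj
    have hjn : (j:ℝ) ≤ n := by
      simp only [Finset.mem_Icc] at hj; exact_mod_cast hj.2
    have h0 := Finset.inf'_le (fun j : ℕ => (S₀ + (j:ℝ)) / ∑ i ∈ Finset.Icc 1 j, 1 / τ i) hj
    have h1 := mul_le_mul_of_nonneg_left h0 (by norm_num : (0:ℝ) ≤ 1/2)
    refine h1.trans ?_
    have hjS : (j:ℝ) ≤ S₀ := hjn.trans hS0n
    have hj0 : (0:ℝ) ≤ j := Nat.cast_nonneg j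
    have hnum : (1/2 : ℝ) * (S₀ + j) ≤ c * ((m:ℝ) + j) := by
      nlinarith [mul_nonneg hc0.le hj0]
    rw [mul_div_assoc', mul_div_assoc', div_le_div_iff₀ (hSum j hj) (hSum j hj)]
    exact mul_le_mul_of_nonneg_right hnum (hSum j hj).le
  · rw [hmap]
    apply Finset.le_inf'
    intro j hj
    have h1 := Finset.inf'_le (fun j => c * (((m:ℝ) + j) / ∑ i ∈ Finset.Icc 1 j, 1 / τ i)) hj
    refine le_trans h1 ?_
    have hj0 : (0:ℝ) ≤ j := Nat.cast_nonneg j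
    have hnum : c * ((m:ℝ) + j) ≤ S₀ + j := by
      nlinarith [mul_nonneg (sub_nonneg.mpr hc1) hj0]
    rw [mul_div_assoc', div_le_div_iff₀ (hSum j hj) (hSum j hj)]
    exact mul_le_mul_of_nonneg_right hnum (hSum j hj).le
end

section
/- Let 0 < τ_1 ≤ ... ≤ τ_n, S > 0, and let t = 4 min_{j∈[n]} (∑_{i=1}^j 1/τ_i)^{-1} (S + j). Then ∑_{i=1}^n ⌊t/(2τ_i)⌋ ≥ S, i.e., in t seconds n parallel workers where worker i needs at most 2τ_i seconds per task complete at least S tasks. -/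
/-!
Let `j` attain the minimum defining `t`, and `H = ∑_{i ≤ j} 1/τ_i`, so that `(t/2) H = 2(S + j)`.
Each floor loses less than `1`, so the first `j` workers alone finish more than
`(t/2) H - j = 2S + j ≥ S` tasks.
-/

open Finset

theorem Finset.sum_sub_card_lt_sum_natFloor {ι α : Type*} [Field α] [LinearOrder α]
    [IsStrictOrderedRing α] [FloorSemiring α] {s : Finset ι} (hs : s.Nonempty) (f : ι → α) :
    ∑ i ∈ s, f i - #s < ∑ i ∈ s, (⌊f i⌋₊ : α) := by
  have h : ∑ i ∈ s, (f i - 1) < ∑ i ∈ s, (⌊f i⌋₊ : α) :=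
    sum_lt_sum_of_nonempty hs fun i _ => Nat.sub_one_lt_floor (f i)
  simpa [sum_sub_distrib] using h

theorem Finset.mul_sum_inv_sub_card_lt_sum_natFloor_div {ι : Type*} {s : Finset ι}
    (hs : s.Nonempty) (τ : ι → ℝ) (T : ℝ) :
    T * ∑ i ∈ s, 1 / τ i - #s < ∑ i ∈ s, (⌊T / τ i⌋₊ : ℝ) := by
  simpa only [mul_sum, mul_one_div] using sum_sub_card_lt_sum_natFloor hs fun i => T / τ i

theorem compute_batch_difference_time_general (n : ℕ) (hn : 1 ≤ n) (τ : ℕ → ℝ)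
    (hpos : ∀ i ∈ Finset.Icc 1 n, 0 < τ i)
    (S : ℝ)
    (t : ℝ)
    (ht : t = 4 * (Finset.Icc 1 n).inf' (Finset.nonempty_Icc.mpr hn)
        (fun j => (S + j) / ∑ i ∈ Finset.Icc 1 j, 1 / τ i)) :
    S ≤ ∑ i ∈ Finset.Icc 1 n, (⌊t / (2 * τ i)⌋₊ : ℝ) := by
  obtain ⟨j, hj, hmin⟩ := exists_mem_eq_inf' (nonempty_Icc.mpr hn)
    fun j => (S + j) / ∑ i ∈ Icc 1 j, 1 / τ i
  obtain ⟨hj1, hjn⟩ := mem_Icc.mp hj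
  have hH : 0 < ∑ i ∈ Icc 1 j, 1 / τ i :=
    sum_pos (fun i hi => one_div_pos.mpr (hpos i (Icc_subset_Icc_right hjn hi)))
      (nonempty_Icc.mpr hj1)
  have hT : t / 2 * ∑ i ∈ Icc 1 j, 1 / τ i = 2 * (S + j) := by
    rw [ht, hmin]
    field_simp
    ring
  have hfirst := mul_sum_inv_sub_card_lt_sum_natFloor_div (nonempty_Icc.mpr hj1) τ (t / 2)
  simp only [div_div, Nat.card_Icc, add_tsub_cancel_right, hT] at hfirst
  have hprefix : ∑ i ∈ Icc 1 j, (⌊t / (2 * τ i)⌋₊ : ℝ) ≤ ∑ i ∈ Icc 1 n, (⌊t / (2 * τ i)⌋₊ : ℝ) :=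
    sum_le_sum_of_subset_of_nonneg (Icc_subset_Icc_right hjn) fun _ _ _ => Nat.cast_nonneg _
  have hnonneg : 0 ≤ ∑ i ∈ Icc 1 n, (⌊t / (2 * τ i)⌋₊ : ℝ) := sum_nonneg fun _ _ => Nat.cast_nonneg _
  have hj1' : (1 : ℝ) ≤ j := by exact_mod_cast hj1
  rcases le_or_gt S 0 with hS | hS <;> linarith

theorem compute_batch_difference_time (n : ℕ) (hn : 1 ≤ n) (τ : ℕ → ℝ)
    (hpos : ∀ i ∈ Finset.Icc 1 n, 0 < τ i)
    (hmono : ∀ i j, 1 ≤ i → i ≤ j → j ≤ n → τ i ≤ τ j)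
    (S : ℝ) (hS : 0 < S)
    (t : ℝ)
    (ht : t = 4 * (Finset.Icc 1 n).inf' (Finset.nonempty_Icc.mpr hn)
        (fun j => (S + j) / ∑ i ∈ Finset.Icc 1 j, 1 / τ i)) :
    S ≤ ∑ i ∈ Finset.Icc 1 n, (⌊t / (2 * τ i)⌋₊ : ℝ) :=
  compute_batch_difference_time_general n hn τ hpos S t ht
end
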